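/- Let W₁ ⪰ W̃₁ ⪰ 0 on ℂ^{d₁}, and let 0 ≤ ζ < 1 and ξ ≥ 0 satisfy (1−ζ)W₁ ⪰ (1+ξ)W̃₁. Then for any W₂ ⪰ W̃₂ ⪰ 0 on ℂ^{d₂}, the operator 𝒲_f = (1−ζ)W₁⊗W₂ − (1+ξ)W̃₁⊗W̃₂ satisfies Tr(𝒲_f σ) ≥ 0 for all separable states σ, and 𝒲_f ≤ 𝒲_c := W₁⊗W₂ − W̃₁⊗W̃₂ in the Loewner order (so 𝒲_f detects every state 𝒲_c detects). -/

import Mathlib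

/-!
On a product state `σ₁ ⊗ σ₂` the witness `A₁ ⊗ A₂ - B₁ ⊗ B₂` evaluates to `a₁ a₂ - b₁ b₂`
with `aᵢ = tr(Aᵢ σᵢ) ≥ bᵢ = tr(Bᵢ σᵢ) ≥ 0`, which is nonnegative; by linearity this extends to
separable states. Applied to `A₁ = (1-ζ)W₁`, `B₁ = (1+ξ)W̃₁`, this gives the first claim, and
`𝒲_c - 𝒲_f = ζ W₁ ⊗ W₂ + ξ W̃₁ ⊗ W̃₂` is a nonnegative combination of Kronecker products of
positive semidefinite matrices.
-/

open ComplexOrder Matrix Kronecker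

/-- A bipartite density matrix is separable if it is a finite convex combination of
product density matrices. -/
def SepState {d₁ d₂ : ℕ} (σ : Matrix (Fin d₁ × Fin d₂) (Fin d₁ × Fin d₂) ℂ) : Prop :=
  ∃ (m : ℕ) (lam : Fin m → ℝ) (σ₁ : Fin m → Matrix (Fin d₁) (Fin d₁) ℂ)
    (σ₂ : Fin m → Matrix (Fin d₂) (Fin d₂) ℂ),
    (∀ q, 0 ≤ lam q) ∧ (∑ q, lam q = 1) ∧
    (∀ q, (σ₁ q).PosSemidef ∧ (σ₁ q).trace = 1) ∧
    (∀ q, (σ₂ q).PosSemidef ∧ (σ₂ q).trace = 1) ∧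
    σ = ∑ q, (lam q : ℂ) • (σ₁ q ⊗ₖ σ₂ q)

namespace Matrix

variable {𝕜 m n : Type*} [RCLike 𝕜] [Fintype m] [Fintype n]

open scoped MatrixOrder Matrix.Norms.L2Operator in
theorem PosSemidef.trace_mul_nonneg {A B : Matrix n n 𝕜} (hA : A.PosSemidef)
    (hB : B.PosSemidef) : 0 ≤ (A * B).trace := by
  classical
  obtain ⟨C, rfl⟩ := CStarAlgebra.nonneg_iff_eq_star_mul_self.mp hA.nonneg
  rw [star_eq_conjTranspose, ← trace_mul_cycle]
  exact (hB.mul_mul_conjTranspose_same C).trace_nonneg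

theorem trace_mul_le_trace_mul_of_posSemidef_sub {A B σ : Matrix n n 𝕜}
    (hAB : (B - A).PosSemidef) (hσ : σ.PosSemidef) : (A * σ).trace ≤ (B * σ).trace := by
  simpa [sub_mul, trace_sub] using hAB.trace_mul_nonneg hσ

theorem trace_sub_kronecker_mul_kronecker_nonneg
    {A₁ B₁ σ₁ : Matrix m m 𝕜} {A₂ B₂ σ₂ : Matrix n n 𝕜}
    (h₁ : (A₁ - B₁).PosSemidef) (hB₁ : B₁.PosSemidef)
    (h₂ : (A₂ - B₂).PosSemidef) (hB₂ : B₂.PosSemidef)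
    (hσ₁ : σ₁.PosSemidef) (hσ₂ : σ₂.PosSemidef) :
    0 ≤ ((A₁ ⊗ₖ A₂ - B₁ ⊗ₖ B₂) * (σ₁ ⊗ₖ σ₂)).trace := by
  rw [sub_mul, ← mul_kronecker_mul, ← mul_kronecker_mul, trace_sub, trace_kronecker,
    trace_kronecker, sub_nonneg]
  have hle₁ := trace_mul_le_trace_mul_of_posSemidef_sub h₁ hσ₁
  exact mul_le_mul hle₁ (trace_mul_le_trace_mul_of_posSemidef_sub h₂ hσ₂)
    (hB₂.trace_mul_nonneg hσ₂) ((hB₁.trace_mul_nonneg hσ₁).trans hle₁)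

end Matrix

theorem SepState.trace_mul_nonneg {d₁ d₂ : ℕ}
    {X σ : Matrix (Fin d₁ × Fin d₂) (Fin d₁ × Fin d₂) ℂ}
    (hX : ∀ (σ₁ : Matrix (Fin d₁) (Fin d₁) ℂ) (σ₂ : Matrix (Fin d₂) (Fin d₂) ℂ),
      σ₁.PosSemidef → σ₂.PosSemidef → 0 ≤ (X * (σ₁ ⊗ₖ σ₂)).trace)
    (hσ : SepState σ) : 0 ≤ (X * σ).trace := by
  obtain ⟨m, lam, σ₁, σ₂, hlam, -, hσ₁, hσ₂, rfl⟩ := hσ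
  rw [Finset.mul_sum, trace_sum]
  refine Finset.sum_nonneg fun q _ => ?_
  rw [mul_smul_comm, trace_smul, smul_eq_mul]
  exact mul_nonneg (Complex.zero_le_real.mpr (hlam q)) (hX _ _ (hσ₁ q).1 (hσ₂ q).1)

theorem stmt_18_general {d₁ d₂ : ℕ}
    (W₁ Wt₁ : Matrix (Fin d₁) (Fin d₁) ℂ) (W₂ Wt₂ : Matrix (Fin d₂) (Fin d₂) ℂ)
    (h₁ : (W₁ - Wt₁).PosSemidef) (h₁' : Wt₁.PosSemidef)
    (h₂ : (W₂ - Wt₂).PosSemidef) (h₂' : Wt₂.PosSemidef)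
    (ζ ξ : ℝ) (hζ0 : 0 ≤ ζ) (hξ : 0 ≤ ξ)
    (himp : (((1 - ζ : ℝ) : ℂ) • W₁ - ((1 + ξ : ℝ) : ℂ) • Wt₁).PosSemidef) :
    (∀ σ : Matrix (Fin d₁ × Fin d₂) (Fin d₁ × Fin d₂) ℂ, SepState σ →
      0 ≤ ((((1 - ζ : ℝ) : ℂ) • (W₁ ⊗ₖ W₂) - ((1 + ξ : ℝ) : ℂ) • (Wt₁ ⊗ₖ Wt₂)) * σ).trace) ∧
    ((W₁ ⊗ₖ W₂ - Wt₁ ⊗ₖ Wt₂)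
      - (((1 - ζ : ℝ) : ℂ) • (W₁ ⊗ₖ W₂) - ((1 + ξ : ℝ) : ℂ) • (Wt₁ ⊗ₖ Wt₂))).PosSemidef := by
  have hW₁ : W₁.PosSemidef := by simpa using h₁.add h₁'
  have hW₂ : W₂.PosSemidef := by simpa using h₂.add h₂'
  refine ⟨fun σ hσ => hσ.trace_mul_nonneg fun σ₁ σ₂ hσ₁ hσ₂ => ?_, ?_⟩
  · rw [← smul_kronecker, ← smul_kronecker]
    exact trace_sub_kronecker_mul_kronecker_nonneg himp
      (h₁'.smul (Complex.zero_le_real.mpr (by linarith))) h₂ h₂' hσ₁ hσ₂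
  · have hgap : (W₁ ⊗ₖ W₂ - Wt₁ ⊗ₖ Wt₂)
        - (((1 - ζ : ℝ) : ℂ) • (W₁ ⊗ₖ W₂) - ((1 + ξ : ℝ) : ℂ) • (Wt₁ ⊗ₖ Wt₂))
        = (ζ : ℂ) • (W₁ ⊗ₖ W₂) + (ξ : ℂ) • (Wt₁ ⊗ₖ Wt₂) := by
      push_cast
      module
    rw [hgap]
    exact ((hW₁.kronecker hW₂).smul (Complex.zero_le_real.mpr hζ0)).add
      ((h₁'.kronecker h₂').smul (Complex.zero_le_real.mpr hξ))

/-- With `W₁ ⪰ W̃₁ ⪰ 0`, `0 ≤ ζ < 1`, `ξ ≥ 0` and `(1−ζ)W₁ ⪰ (1+ξ)W̃₁`, the improved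
witness `𝒲_f = (1−ζ)W₁⊗W₂ − (1+ξ)W̃₁⊗W̃₂` is nonnegative on all separable states and
satisfies `𝒲_f ≤ 𝒲_c` in the Loewner order, where `𝒲_c = W₁⊗W₂ − W̃₁⊗W̃₂`. -/
theorem stmt_18 {d₁ d₂ : ℕ}
    (W₁ Wt₁ : Matrix (Fin d₁) (Fin d₁) ℂ) (W₂ Wt₂ : Matrix (Fin d₂) (Fin d₂) ℂ)
    (h₁ : (W₁ - Wt₁).PosSemidef) (h₁' : Wt₁.PosSemidef)
    (h₂ : (W₂ - Wt₂).PosSemidef) (h₂' : Wt₂.PosSemidef)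
    (ζ ξ : ℝ) (hζ0 : 0 ≤ ζ) (hζ1 : ζ < 1) (hξ : 0 ≤ ξ)
    (himp : (((1 - ζ : ℝ) : ℂ) • W₁ - ((1 + ξ : ℝ) : ℂ) • Wt₁).PosSemidef) :
    (∀ σ : Matrix (Fin d₁ × Fin d₂) (Fin d₁ × Fin d₂) ℂ, SepState σ →
      0 ≤ ((((1 - ζ : ℝ) : ℂ) • (W₁ ⊗ₖ W₂) - ((1 + ξ : ℝ) : ℂ) • (Wt₁ ⊗ₖ Wt₂)) * σ).trace) ∧
    ((W₁ ⊗ₖ W₂ - Wt₁ ⊗ₖ Wt₂)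
      - (((1 - ζ : ℝ) : ℂ) • (W₁ ⊗ₖ W₂) - ((1 + ξ : ℝ) : ℂ) • (Wt₁ ⊗ₖ Wt₂))).PosSemidef :=
  stmt_18_general W₁ Wt₁ W₂ Wt₂ h₁ h₁' h₂ h₂' ζ ξ hζ0 hξ himp
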